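/- Let D be a positive, 1-periodic, C² function that is not constant, and let q ∈ ℝ with q ≠ 0. Then there exists a continuous 1-periodic function r : ℝ → ℝ with the following property: whenever, for every λ ∈ ℝ, (k(λ), ψ_λ) is a principal eigenpair of L_q^λ[r;D] and (k₀(λ), φ_λ) is a principal eigenpair of L_0^λ[r;D], one has k(0) < k₀(0), and moreover 0 < inf_{λ>0} k(λ)/λ < inf_{λ>0} k₀(λ)/λ. -/

import Mathlib

open Real MeasureTheory Set Filter Topology

noncomputable section

/-- The operator `L_q^λ[r;D]` acting on C² functions `ψ`:
`(L_q^λ[r;D]ψ)(x) = D ψ'' + ((1+q)D' − 2λD) ψ' + (qD'' + λ²D − (1+q)λD' + r) ψ`. -/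
def Lop (q lam : ℝ) (r D ψ : ℝ → ℝ) (x : ℝ) : ℝ :=
  D x * deriv (deriv ψ) x + ((1 + q) * deriv D x - 2 * lam * D x) * deriv ψ x +
    (q * deriv (deriv D) x + lam ^ 2 * D x - (1 + q) * lam * deriv D x + r x) * ψ x

/-- `(k, ψ)` is a principal eigenpair of `L_q^λ[r;D]`: `ψ` is a positive, 1-periodic,
C² function with `L_q^λ[r;D]ψ = kψ`. -/
def IsEigenpair (q lam : ℝ) (r D : ℝ → ℝ) (k : ℝ) (ψ : ℝ → ℝ) : Prop :=
  ContDiff ℝ 2 ψ ∧ (∀ x, 0 < ψ x) ∧ Function.Periodic ψ 1 ∧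
    ∀ x, Lop q lam r D ψ x = k * ψ x

/-- The Freidlin–Gärtner infimum `inf_{λ>0} k(λ)/λ`, as an extended real number. -/
def speed (k : ℝ → ℝ) : EReal := ⨅ l : {l : ℝ // 0 < l}, ((k l.1 / l.1 : ℝ) : EReal)

/-!
For an eigenpair `(k, ψ)` of `L_q^λ[r;D]` the function `G = Dψ'/ψ + qD'/2 − λD` is periodic,
solves the Riccati equation `G' = k − V − G²/D` with `V = r + qD''/2 − q²D'²/(4D)`, and
`∫₀¹ G/D = −λ`. Integrating over a period and Cauchy–Schwarz give `k ≥ ∫₀¹ V + λ²/A` with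
`A = ∫₀¹ 1/D`. For `r = c − qD''/2 + q²D'²/(4D)` the potential of `L_q` is the constant `c`,
and an integrating factor with Rolle's theorem gives the reverse bound `k ≤ c + λ²/(A² min D)`;
the potential of `L_0` is `r` itself, whose mean `c + (q²/4)∫₀¹ D'²/D` exceeds `c` by a fixed
amount because `D` is not constant. Taking `c = (q²/4)(∫₀¹ D'²/D) A min D / 2` makes both
comparisons strict, through `inf_{λ>0} (a + λ²/b)/λ = 2√(a/b)`.
-/

open Function

theorem Function.Periodic.deriv {f : ℝ → ℝ} {c : ℝ} (hf : Periodic f c) :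
    Periodic (_root_.deriv f) c := fun x => by
  rw [← deriv_comp_add_const, hf.funext]

theorem Function.Periodic.integral_eq_zero_of_hasDerivAt {f f' : ℝ → ℝ} {c : ℝ}
    (hf : Periodic f c) (hderiv : ∀ x, HasDerivAt f (f' x) x) (hf' : Continuous f') (a : ℝ) :
    ∫ x in a..a + c, f' x = 0 := by
  rw [intervalIntegral.integral_eq_sub_of_hasDerivAt (fun x _ => hderiv x)
    (hf'.intervalIntegrable _ _), hf a, sub_self]

theorem Function.Periodic.integral_div_eq_zero_of_hasDerivAt {f f' : ℝ → ℝ} {c : ℝ}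
    (hf : Periodic f c) (hderiv : ∀ x, HasDerivAt f (f' x) x) (hf' : Continuous f')
    (hne : ∀ x, f x ≠ 0) (a : ℝ) :
    ∫ x in a..a + c, f' x / f x = 0 :=
  (hf.comp Real.log).integral_eq_zero_of_hasDerivAt (fun x => (hderiv x).log (hne x))
    (hf'.div (continuous_iff_continuousAt.2 fun x => (hderiv x).continuousAt) hne) a

theorem Function.Periodic.exists_forall_le {f : ℝ → ℝ} {c : ℝ} (hf : Periodic f c) (hc : c ≠ 0)
    (hcont : Continuous f) : ∃ x₀, ∀ x, f x₀ ≤ f x := by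
  obtain ⟨_, ⟨x₀, rfl⟩, hle⟩ :=
    (hf.compact_of_continuous hc hcont).exists_isLeast (range_nonempty f)
  exact ⟨x₀, fun x => hle ⟨x, rfl⟩⟩

theorem intervalIntegral.integral_inv_pos {D : ℝ → ℝ} {a b : ℝ} (hab : a < b)
    (hD : Continuous D) (hDpos : ∀ x, 0 < D x) : 0 < ∫ x in a..b, (D x)⁻¹ :=
  intervalIntegral.intervalIntegral_pos_of_pos_on
    ((hD.inv₀ fun x => (hDpos x).ne').intervalIntegrable _ _) (fun x _ => inv_pos.2 (hDpos x)) hab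

theorem sq_integral_div_le_mul {G w : ℝ → ℝ} {a b : ℝ} (hab : a ≤ b) (hG : Continuous G)
    (hw : Continuous w) (hwpos : ∀ x, 0 < w x) :
    (∫ x in a..b, G x / w x) ^ 2 ≤ (∫ x in a..b, (w x)⁻¹) * ∫ x in a..b, G x ^ 2 / w x := by
  have hw0 : ∀ x, w x ≠ 0 := fun x => (hwpos x).ne'
  have hquad : ∀ t : ℝ, 0 ≤ (∫ x in a..b, (w x)⁻¹) * (t * t)
      + 2 * (∫ x in a..b, G x / w x) * t + ∫ x in a..b, G x ^ 2 / w x := fun t => by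
    have hexp : ∀ x, (G x + t) ^ 2 / w x
        = (w x)⁻¹ * (t * t) + 2 * t * (G x / w x) + G x ^ 2 / w x := fun x => by
      field_simp
      ring
    have hnonneg : 0 ≤ ∫ x in a..b, (G x + t) ^ 2 / w x :=
      intervalIntegral.integral_nonneg hab fun x _ => div_nonneg (sq_nonneg _) (hwpos x).le
    simp_rw [hexp] at hnonneg
    rw [intervalIntegral.integral_add, intervalIntegral.integral_add,
      intervalIntegral.integral_mul_const, intervalIntegral.integral_const_mul] at hnonneg
    · linarith
    all_goals apply Continuous.intervalIntegrable; fun_prop (disch := exact hw0 _)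
  have := discrim_le_zero hquad
  rw [discrim] at this
  linarith

theorem le_speed_of_add_sq_div_le {k : ℝ → ℝ} {a b : ℝ} (ha : 0 ≤ a) (hb : 0 < b)
    (h : ∀ l, 0 < l → a + l ^ 2 / b ≤ k l) : ((2 * √(a / b) : ℝ) : EReal) ≤ speed k :=
  le_iInf fun l => EReal.coe_le_coe_iff.2 <| by
    have hs := Real.sq_sqrt (div_nonneg ha hb.le)
    have hu : l.1 ^ 2 / b * b = l.1 ^ 2 := div_mul_cancel₀ _ hb.ne'
    rw [le_div_iff₀ l.2]
    rw [eq_div_iff hb.ne'] at hs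
    nlinarith [h l.1 l.2, sq_nonneg (√(a / b) * b - l.1)]

theorem speed_le_of_le_add_sq_div {k : ℝ → ℝ} {a b : ℝ} (ha : 0 < a) (hb : 0 < b)
    (h : ∀ l, 0 < l → k l ≤ a + l ^ 2 / b) : speed k ≤ ((2 * √(a / b) : ℝ) : EReal) := by
  have hl : 0 < √(a * b) := by positivity
  refine (iInf_le _ ⟨√(a * b), hl⟩).trans (EReal.coe_le_coe_iff.2 ?_)
  refine (div_le_div_of_nonneg_right (h _ hl) hl.le).trans_eq ?_
  rw [Real.sq_sqrt (by positivity), Real.sqrt_div ha.le, Real.sqrt_mul ha.le]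
  field_simp
  rw [Real.sq_sqrt ha.le]
  ring

section Riccati

variable {D G V : ℝ → ℝ} {k lam : ℝ}

theorem eq_integral_add_integral_of_riccati (hD : Continuous D) (hDpos : ∀ x, 0 < D x)
    (hV : Continuous V) (hG : ∀ x, HasDerivAt G (k - V x - G x ^ 2 / D x) x)
    (hGper : Periodic G 1) :
    k = (∫ x in (0 : ℝ)..1, V x) + ∫ x in (0 : ℝ)..1, G x ^ 2 / D x := by
  have hGc : Continuous G := continuous_iff_continuousAt.2 fun x => (hG x).continuousAt
  have hD0 : ∀ x, D x ≠ 0 := fun x => (hDpos x).ne'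
  have hzero := hGper.integral_eq_zero_of_hasDerivAt hG (by fun_prop (disch := exact hD0 _)) 0
  rw [zero_add, intervalIntegral.integral_sub, intervalIntegral.integral_sub] at hzero
  · simp only [intervalIntegral.integral_const, sub_zero, smul_eq_mul, one_mul] at hzero
    linarith
  all_goals apply Continuous.intervalIntegrable; fun_prop (disch := exact hD0 _)

theorem integral_add_sq_div_le_of_riccati (hD : Continuous D) (hDpos : ∀ x, 0 < D x)
    (hV : Continuous V) (hG : ∀ x, HasDerivAt G (k - V x - G x ^ 2 / D x) x)
    (hGper : Periodic G 1) (hGint : ∫ x in (0 : ℝ)..1, G x / D x = -lam) :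
    (∫ x in (0 : ℝ)..1, V x) + lam ^ 2 / ∫ x in (0 : ℝ)..1, (D x)⁻¹ ≤ k := by
  have hGc : Continuous G := continuous_iff_continuousAt.2 fun x => (hG x).continuousAt
  have hA := intervalIntegral.integral_inv_pos zero_lt_one hD hDpos
  have hcs := sq_integral_div_le_mul zero_le_one hGc hD hDpos
  rw [hGint, neg_sq] at hcs
  rw [eq_integral_add_integral_of_riccati hD hDpos hV hG hGper, add_le_add_iff_left,
    div_le_iff₀' hA]
  exact hcs

theorem exists_eq_neg_div_of_integral_div_eq (hG : Continuous G) (hD : Continuous D)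
    (hDpos : ∀ x, 0 < D x) (hGint : ∫ x in (0 : ℝ)..1, G x / D x = -lam) :
    ∃ x, G x = -lam / ∫ x in (0 : ℝ)..1, (D x)⁻¹ := by
  set A := ∫ x in (0 : ℝ)..1, (D x)⁻¹
  have hD0 : ∀ x, D x ≠ 0 := fun x => (hDpos x).ne'
  have hA : 0 < A := intervalIntegral.integral_inv_pos zero_lt_one hD hDpos
  set Z := fun x => G x + lam / A
  have hZint : ∫ x in (0 : ℝ)..1, Z x / D x = 0 := by
    simp only [Z, add_div, div_eq_mul_inv (lam / A)]
    rw [intervalIntegral.integral_add, intervalIntegral.integral_const_mul, hGint]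
    · change -lam + lam / A * A = 0
      rw [div_mul_cancel₀ lam hA.ne', neg_add_cancel]
    all_goals apply Continuous.intervalIntegrable; fun_prop (disch := exact hD0 _)
  obtain ⟨x₀, -, hx₀⟩ := exists_eq_interval_average zero_ne_one
    (Continuous.continuousOn (by fun_prop (disch := exact hD0 _) : Continuous fun x => Z x / D x))
  rw [interval_average_eq_div, hZint, zero_div, div_eq_zero_iff, or_iff_left (hD0 x₀)] at hx₀
  exact ⟨x₀, by rw [neg_div, ← add_eq_zero_iff_eq_neg]; exact hx₀⟩

/-- With a constant potential and `A = ∫₀¹ 1/D`, `(G + λ/A) e^W` with `W' = (G − λ/A)/D` has derivative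
`(k − c − λ²/(A²D)) e^W`, and `G + λ/A` vanishes somewhere since its `1/D`-weighted mean is
zero; Rolle's theorem on a period then locates a point where `k − c = λ²/(A²D)`. -/
theorem exists_eq_of_riccati_const {c : ℝ} (hD : Continuous D) (hDpos : ∀ x, 0 < D x)
    (hG : ∀ x, HasDerivAt G (k - c - G x ^ 2 / D x) x) (hGper : Periodic G 1)
    (hGint : ∫ x in (0 : ℝ)..1, G x / D x = -lam) :
    ∃ x, k = c + lam ^ 2 / ((∫ x in (0 : ℝ)..1, (D x)⁻¹) ^ 2 * D x) := by
  have hGc : Continuous G := continuous_iff_continuousAt.2 fun x => (hG x).continuousAt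
  obtain ⟨x₀, hx₀⟩ := exists_eq_neg_div_of_integral_div_eq hGc hD hDpos hGint
  set A := ∫ x in (0 : ℝ)..1, (D x)⁻¹
  have hD0 : ∀ x, D x ≠ 0 := fun x => (hDpos x).ne'
  have hA : 0 < A := intervalIntegral.integral_inv_pos zero_lt_one hD hDpos
  set Z := fun x => G x + lam / A
  set w := fun x => (G x - lam / A) / D x
  have hwc : Continuous w := by fun_prop (disch := exact hD0 _)
  have hW : ∀ x, HasDerivAt (fun y => ∫ t in (0 : ℝ)..y, w t) (w x) x := fun x =>
    (hwc.integral_hasStrictDerivAt 0 x).hasDerivAt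
  set F := fun x => Z x * Real.exp (∫ t in (0 : ℝ)..x, w t)
  have hF : ∀ x, HasDerivAt F
      ((k - c - lam ^ 2 / (A ^ 2 * D x)) * Real.exp (∫ t in (0 : ℝ)..x, w t)) x := fun x => by
    refine (((hG x).add_const (lam / A)).mul (hW x).exp).congr_deriv ?_
    generalize Real.exp (∫ t in (0 : ℝ)..x, w t) = E
    simp only [w]
    field_simp [hD0 x]
    ring
  have hFper : F x₀ = F (x₀ + 1) := by
    simp only [F, Z, hGper x₀, hx₀, neg_div, neg_add_cancel, zero_mul]
  obtain ⟨x, -, hx⟩ := exists_hasDerivAt_eq_zero (lt_add_one x₀)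
    (continuous_iff_continuousAt.2 fun x => (hF x).continuousAt).continuousOn hFper
    fun x _ => hF x
  refine ⟨x, ?_⟩
  rw [mul_eq_zero, or_iff_left (Real.exp_ne_zero _)] at hx
  linarith

end Riccati

/-- Writing `ψ = exp ∫ (G − qD'/2 + λD)/D` turns `L_q^λ[r;D]ψ = kψ` into the Riccati equation
`G' = k − V − G²/D` for `G = riccati q lam D ψ` and `V = effectivePotential q r D`. -/
def riccati (q lam : ℝ) (D ψ : ℝ → ℝ) (x : ℝ) : ℝ :=
  D x * deriv ψ x / ψ x + q / 2 * deriv D x - lam * D x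

def effectivePotential (q : ℝ) (r D : ℝ → ℝ) (x : ℝ) : ℝ :=
  r x + q / 2 * deriv (deriv D) x - q ^ 2 / 4 * deriv D x ^ 2 / D x

theorem ContDiff.contDiff_one_deriv {f : ℝ → ℝ} (hf : ContDiff ℝ 2 f) : ContDiff ℝ 1 (deriv f) :=
  hf.deriv'

section Eigenpair

variable {q lam k : ℝ} {r D ψ : ℝ → ℝ}

theorem IsEigenpair.hasDerivAt_riccati (hD : ContDiff ℝ 2 D) (hDpos : ∀ x, 0 < D x)
    (h : IsEigenpair q lam r D k ψ) (x : ℝ) :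
    HasDerivAt (riccati q lam D ψ)
      (k - effectivePotential q r D x - riccati q lam D ψ x ^ 2 / D x) x := by
  obtain ⟨hψ, hψpos, -, heq⟩ := h
  have hD' := hD.contDiff_one_deriv.differentiable one_ne_zero x
  have hψ' := hψ.contDiff_one_deriv.differentiable one_ne_zero x
  refine (((((hD.differentiable two_ne_zero x).hasDerivAt.mul hψ'.hasDerivAt).div
    (hψ.differentiable two_ne_zero x).hasDerivAt (hψpos x).ne').add
    (hD'.hasDerivAt.const_mul (q / 2))).sub
    ((hD.differentiable two_ne_zero x).hasDerivAt.const_mul lam)).congr_deriv ?_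
  have hL := heq x
  simp only [Lop] at hL
  simp only [riccati, effectivePotential, Pi.mul_apply]
  field_simp [(hψpos x).ne', (hDpos x).ne']
  linear_combination (16 * D x * ψ x) * hL

theorem periodic_riccati (hDper : Periodic D 1) (hψper : Periodic ψ 1) :
    Periodic (riccati q lam D ψ) 1 := fun x => by
  simp only [riccati, hDper x, hψper x, hDper.deriv x, hψper.deriv x]

theorem integral_riccati_div (hD : ContDiff ℝ 1 D) (hDpos : ∀ x, 0 < D x)
    (hDper : Periodic D 1) (hψ : ContDiff ℝ 1 ψ) (hψpos : ∀ x, 0 < ψ x)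
    (hψper : Periodic ψ 1) :
    ∫ x in (0 : ℝ)..1, riccati q lam D ψ x / D x = -lam := by
  have hD0 : ∀ x, D x ≠ 0 := fun x => (hDpos x).ne'
  have hψ0 : ∀ x, ψ x ≠ 0 := fun x => (hψpos x).ne'
  have hD' := hD.continuous_deriv le_rfl
  have hψ' := hψ.continuous_deriv le_rfl
  have hsplit : ∀ x, riccati q lam D ψ x / D x
      = deriv ψ x / ψ x + q / 2 * (deriv D x / D x) - lam := fun x => by
    simp only [riccati]
    field_simp [hD0 x]
  have hlogψ := hψper.integral_div_eq_zero_of_hasDerivAt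
    (fun x => (hψ.differentiable one_ne_zero x).hasDerivAt) hψ' hψ0 0
  have hlogD := hDper.integral_div_eq_zero_of_hasDerivAt
    (fun x => (hD.differentiable one_ne_zero x).hasDerivAt) hD' hD0 0
  rw [zero_add] at hlogψ hlogD
  simp_rw [hsplit]
  rw [intervalIntegral.integral_sub, intervalIntegral.integral_add,
    intervalIntegral.integral_const_mul, hlogψ, hlogD]
  · simp
  all_goals apply Continuous.intervalIntegrable
  all_goals fun_prop (disch := first | exact hD0 _ | exact hψ0 _)

theorem continuous_effectivePotential (hD : ContDiff ℝ 2 D) (hDpos : ∀ x, 0 < D x)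
    (hr : Continuous r) : Continuous (effectivePotential q r D) := by
  have := hD.contDiff_one_deriv.continuous_deriv le_rfl
  have := hD.continuous_deriv one_le_two
  have := hD.continuous
  have hD0 : ∀ x, D x ≠ 0 := fun x => (hDpos x).ne'
  unfold effectivePotential
  fun_prop (disch := assumption)

theorem IsEigenpair.integral_effectivePotential_add_le (hD : ContDiff ℝ 2 D)
    (hDpos : ∀ x, 0 < D x) (hDper : Periodic D 1) (hr : Continuous r)
    (h : IsEigenpair q lam r D k ψ) :
    (∫ x in (0 : ℝ)..1, effectivePotential q r D x) + lam ^ 2 / ∫ x in (0 : ℝ)..1, (D x)⁻¹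
      ≤ k :=
  integral_add_sq_div_le_of_riccati hD.continuous hDpos (continuous_effectivePotential hD hDpos hr)
    (h.hasDerivAt_riccati hD hDpos) (periodic_riccati hDper h.2.2.1)
    (integral_riccati_div (hD.of_le one_le_two) hDpos hDper (h.1.of_le one_le_two) h.2.1 h.2.2.1)

theorem IsEigenpair.exists_eq_of_effectivePotential_eq_const {c : ℝ} (hD : ContDiff ℝ 2 D)
    (hDpos : ∀ x, 0 < D x) (hDper : Periodic D 1) (hV : ∀ x, effectivePotential q r D x = c)
    (h : IsEigenpair q lam r D k ψ) :
    ∃ x, k = c + lam ^ 2 / ((∫ x in (0 : ℝ)..1, (D x)⁻¹) ^ 2 * D x) :=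
  exists_eq_of_riccati_const hD.continuous hDpos
    (fun x => hV x ▸ h.hasDerivAt_riccati hD hDpos x) (periodic_riccati hDper h.2.2.1)
    (integral_riccati_div (hD.of_le one_le_two) hDpos hDper (h.1.of_le one_le_two) h.2.1 h.2.2.1)

end Eigenpair

theorem integral_deriv_sq_div_pos {D : ℝ → ℝ} (hD : ContDiff ℝ 1 D) (hDpos : ∀ x, 0 < D x)
    (hDper : Periodic D 1) (hDnc : ¬ ∃ c, ∀ x, D x = c) :
    0 < ∫ x in (0 : ℝ)..1, deriv D x ^ 2 / D x := by
  obtain ⟨x, hx⟩ : ∃ x, deriv D x ≠ 0 := by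
    contrapose! hDnc
    exact ⟨D 0, fun x => is_const_of_deriv_eq_zero (hD.differentiable one_ne_zero) hDnc x 0⟩
  obtain ⟨y, hy, hxy⟩ := hDper.deriv.exists_mem_Ico₀ one_pos x
  have := hD.continuous_deriv le_rfl
  have := hD.continuous
  have hD0 : ∀ x, D x ≠ 0 := fun x => (hDpos x).ne'
  refine intervalIntegral.integral_pos one_pos
    (Continuous.continuousOn (by fun_prop (disch := assumption)))
    (fun x _ => div_nonneg (sq_nonneg _) (hDpos x).le) ⟨y, Ico_subset_Icc_self hy, ?_⟩
  exact div_pos (by rw [hxy] at hx; positivity) (hDpos y)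

def balancedPotential (q c : ℝ) (D : ℝ → ℝ) (x : ℝ) : ℝ :=
  c - q / 2 * deriv (deriv D) x + q ^ 2 / 4 * deriv D x ^ 2 / D x

section BalancedPotential

variable {q c lam k : ℝ} {D ψ : ℝ → ℝ}

theorem effectivePotential_balancedPotential (x : ℝ) :
    effectivePotential q (balancedPotential q c D) D x = c := by
  simp only [effectivePotential, balancedPotential]
  ring

theorem effectivePotential_zero (r : ℝ → ℝ) : effectivePotential 0 r D = r := by
  ext x
  simp [effectivePotential]

theorem continuous_balancedPotential (hD : ContDiff ℝ 2 D) (hDpos : ∀ x, 0 < D x) :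
    Continuous (balancedPotential q c D) := by
  have := hD.contDiff_one_deriv.continuous_deriv le_rfl
  have := hD.continuous_deriv one_le_two
  have := hD.continuous
  have hD0 : ∀ x, D x ≠ 0 := fun x => (hDpos x).ne'
  unfold balancedPotential
  fun_prop (disch := assumption)

theorem periodic_balancedPotential (hDper : Periodic D 1) :
    Periodic (balancedPotential q c D) 1 := fun x => by
  simp only [balancedPotential, hDper x, hDper.deriv x, hDper.deriv.deriv x]

theorem integral_balancedPotential (hD : ContDiff ℝ 2 D) (hDpos : ∀ x, 0 < D x)
    (hDper : Periodic D 1) :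
    ∫ x in (0 : ℝ)..1, balancedPotential q c D x
      = c + q ^ 2 / 4 * ∫ x in (0 : ℝ)..1, deriv D x ^ 2 / D x := by
  have hD0 : ∀ x, D x ≠ 0 := fun x => (hDpos x).ne'
  have hD' := hD.continuous_deriv one_le_two
  have hD'' := hD.contDiff_one_deriv.continuous_deriv le_rfl
  have := hD.continuous
  have hint'' := hDper.deriv.integral_eq_zero_of_hasDerivAt
    (fun x => (hD.contDiff_one_deriv.differentiable one_ne_zero x).hasDerivAt) hD'' 0
  rw [zero_add] at hint''
  simp only [balancedPotential, mul_div_assoc]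
  rw [intervalIntegral.integral_add, intervalIntegral.integral_sub,
    intervalIntegral.integral_const_mul, intervalIntegral.integral_const_mul, hint'']
  · simp
  all_goals apply Continuous.intervalIntegrable
  all_goals fun_prop (disch := assumption)

theorem IsEigenpair.add_sq_div_le_of_balancedPotential (hD : ContDiff ℝ 2 D)
    (hDpos : ∀ x, 0 < D x) (hDper : Periodic D 1)
    (h : IsEigenpair q lam (balancedPotential q c D) D k ψ) :
    c + lam ^ 2 / ∫ x in (0 : ℝ)..1, (D x)⁻¹ ≤ k := by
  simpa [effectivePotential_balancedPotential] using
    h.integral_effectivePotential_add_le hD hDpos hDper (continuous_balancedPotential hD hDpos)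

theorem IsEigenpair.le_add_sq_div_of_balancedPotential (hD : ContDiff ℝ 2 D)
    (hDpos : ∀ x, 0 < D x) (hDper : Periodic D 1) {m : ℝ} (hm : 0 < m) (hmD : ∀ x, m ≤ D x)
    (h : IsEigenpair q lam (balancedPotential q c D) D k ψ) :
    k ≤ c + lam ^ 2 / ((∫ x in (0 : ℝ)..1, (D x)⁻¹) ^ 2 * m) := by
  obtain ⟨x, rfl⟩ := h.exists_eq_of_effectivePotential_eq_const hD hDpos hDper
    effectivePotential_balancedPotential
  have := intervalIntegral.integral_inv_pos zero_lt_one hD.continuous hDpos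
  gcongr
  exact hmD x

theorem IsEigenpair.add_integral_add_sq_div_le_of_balancedPotential (hD : ContDiff ℝ 2 D)
    (hDpos : ∀ x, 0 < D x) (hDper : Periodic D 1)
    (h : IsEigenpair 0 lam (balancedPotential q c D) D k ψ) :
    c + q ^ 2 / 4 * (∫ x in (0 : ℝ)..1, deriv D x ^ 2 / D x)
      + lam ^ 2 / ∫ x in (0 : ℝ)..1, (D x)⁻¹ ≤ k := by
  simpa [effectivePotential_zero, integral_balancedPotential hD hDpos hDper] using
    h.integral_effectivePotential_add_le hD hDpos hDper (continuous_balancedPotential hD hDpos)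

end BalancedPotential

theorem stmt_0 (D : ℝ → ℝ) (hD : ContDiff ℝ 2 D) (hDpos : ∀ x, 0 < D x)
    (hDper : Function.Periodic D 1) (hDnc : ¬ ∃ c, ∀ x, D x = c)
    (q : ℝ) (hq : q ≠ 0) :
    ∃ r : ℝ → ℝ, Continuous r ∧ Function.Periodic r 1 ∧
      ∀ (k k₀ : ℝ → ℝ) (ψ φ : ℝ → ℝ → ℝ),
        (∀ lam : ℝ, IsEigenpair q lam r D (k lam) (ψ lam)) →
        (∀ lam : ℝ, IsEigenpair 0 lam r D (k₀ lam) (φ lam)) →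
        k 0 < k₀ 0 ∧ (0 : EReal) < speed k ∧ speed k < speed k₀ := by
  set A := ∫ x in (0 : ℝ)..1, (D x)⁻¹
  have hA : 0 < A := intervalIntegral.integral_inv_pos zero_lt_one hD.continuous hDpos
  set C := q ^ 2 / 4 * ∫ x in (0 : ℝ)..1, deriv D x ^ 2 / D x
  have hC : 0 < C :=
    mul_pos (by positivity) (integral_deriv_sq_div_pos (hD.of_le one_le_two) hDpos hDper hDnc)
  obtain ⟨x₀, hx₀⟩ := hDper.exists_forall_le one_ne_zero hD.continuous
  have hm := hDpos x₀
  set c := C * A * D x₀ / 2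
  have hc : 0 < c := by positivity
  refine ⟨balancedPotential q c D, continuous_balancedPotential hD hDpos,
    periodic_balancedPotential hDper, fun k k₀ ψ φ hk hk₀ => ?_⟩
  have hk_ge l := (hk l).add_sq_div_le_of_balancedPotential hD hDpos hDper
  have hk_le l := (hk l).le_add_sq_div_of_balancedPotential hD hDpos hDper hm hx₀
  have hk₀_ge l := (hk₀ l).add_integral_add_sq_div_le_of_balancedPotential hD hDpos hDper
  refine ⟨?_, ?_, ?_⟩
  · calc k 0 ≤ c := by simpa using hk_le 0
      _ < c + C := by linarith
      _ ≤ k₀ 0 := by simpa using hk₀_ge 0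
  · calc (0 : EReal) < ((2 * √(c / A) : ℝ) : EReal) := EReal.coe_pos.2 (by positivity)
      _ ≤ speed k := le_speed_of_add_sq_div_le hc.le hA fun l _ => hk_ge l
  · have hcC : c / (A ^ 2 * D x₀) < (c + C) / A := by
      rw [show c / (A ^ 2 * D x₀) = C / A / 2 by simp only [c]; field_simp]
      exact (half_lt_self (by positivity)).trans (by gcongr; linarith)
    calc speed k ≤ ((2 * √(c / (A ^ 2 * D x₀)) : ℝ) : EReal) :=
          speed_le_of_le_add_sq_div hc (by positivity) fun l _ => hk_le l
      _ < ((2 * √((c + C) / A) : ℝ) : EReal) := EReal.coe_lt_coe_iff.2 (by gcongr)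
      _ ≤ speed k₀ := le_speed_of_add_sq_div_le (by positivity) hA fun l _ => hk₀_ge l
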